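/- For the second-order Winfree model with inertia, suppose $\sup_{t\in[0,T]}\mathcal{D}(\Theta_t) \le D$ and let $m_0 = \max\{\mathcal{D}(\Omega_0), (\mathcal{D}(\nu)+2\kappa D)/\gamma\}$. Then for all $i,j$ and all $t \in (0,T)$: $\frac{d}{dt}(\omega^{ij}_t + \gamma\theta^{ij}_t) \le \mathcal{D}(\nu) + \frac{2\kappa}{\gamma}m_0 + 3\kappa D^2 - \frac{\kappa}{\gamma}\cos\theta^c_t(1+\cos\theta^c_t)(\omega^{ij}_t + \gamma\theta^{ij}_t)$, where $\theta^{ij} = \theta^i - \theta^j$, $\omega^{ij} = \omega^i - \omega^j$. -/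

import Mathlib

open Real

/-- Diameter of a vector in `ℝ^N`: `𝒟(x) = max_{i,j} |x^i - x^j|`. -/
noncomputable def vdiam {N : ℕ} (x : Fin N → ℝ) : ℝ := ⨆ i, ⨆ j, |x i - x j|

/-!
The derivative of `ω^{ij} + γθ^{ij}` is `ν^{ij} - κ 𝓘_c (sin θ^i - sin θ^j)`. By the mean value
theorem `sin θ^i - sin θ^j = cos ξ · θ^{ij}` with `ξ` between `θ^i` and `θ^j`. Since `ξ` and all
phases lie within `D` of the mean phase `θ^c` and cosine is 1-Lipschitz, `𝓘_c cos ξ` is within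
`3D` of `cos θ^c (1 + cos θ^c)`, which produces the term `3κD²`. The remaining term
`(κ/γ) cos θ^c (1 + cos θ^c) ω^{ij}` is at most `2κm₀/γ` because `|ω^{ij}| ≤ m₀`: the equation
`ω̇^{ij} = -γω^{ij} + g` with `|g| ≤ 𝒟(ν) + 2κD` makes `e^{γt}(ω^{ij} - (𝒟(ν) + 2κD)/γ)`
nonincreasing.
-/

open Set

lemma abs_sub_le_vdiam {N : ℕ} (x : Fin N → ℝ) (i j : Fin N) : |x i - x j| ≤ vdiam x :=
  (le_ciSup (f := fun j => |x i - x j|) (finite_range _).bddAbove j).trans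
    (le_ciSup (f := fun i => ⨆ j, |x i - x j|) (finite_range _).bddAbove i)

lemma abs_sub_mean_le {N : ℕ} (hN : 0 < N) {x : Fin N → ℝ} {c D : ℝ}
    (h : ∀ k, |c - x k| ≤ D) : |c - (∑ k, x k) / N| ≤ D := by
  have hN' : (0 : ℝ) < N := by exact_mod_cast hN
  have hmean : c - (∑ k, x k) / N = (∑ k, (c - x k)) / N := by
    rw [Finset.sum_sub_distrib, Finset.sum_const, Finset.card_univ, Fintype.card_fin,
      nsmul_eq_mul]
    field_simp
  rw [hmean, abs_div, abs_of_pos hN', div_le_iff₀ hN']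
  calc |∑ k, (c - x k)| ≤ ∑ k, |c - x k| := Finset.abs_sum_le_sum_abs _ _
    _ ≤ ∑ _k : Fin N, D := Finset.sum_le_sum fun k _ => h k
    _ = D * N := by simp [mul_comm]

lemma exists_mem_uIcc_sin_sub_sin (a b : ℝ) :
    ∃ ξ ∈ uIcc a b, sin a - sin b = cos ξ * (a - b) := by
  wlog hba : b < a generalizing a b
  · rcases (not_lt.1 hba).eq_or_lt with rfl | hab
    · exact ⟨a, left_mem_uIcc, by simp⟩
    · obtain ⟨ξ, hξ, h⟩ := this b a hab
      exact ⟨ξ, uIcc_comm a b ▸ hξ, by linear_combination -h⟩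
  obtain ⟨ξ, hξ, h⟩ := exists_hasDerivAt_eq_slope sin cos hba continuous_sin.continuousOn
    fun x _ => hasDerivAt_sin x
  exact ⟨ξ, Icc_subset_uIcc' (Ioo_subset_Icc_self hξ), by
    rw [h, div_mul_cancel₀ _ (sub_ne_zero.2 hba.ne')]⟩

lemma le_max_of_hasDerivAt_eq_neg_mul_add {F g : ℝ → ℝ} {γ a T : ℝ} (hγ : 0 < γ)
    (hF : ∀ t ∈ Icc 0 T, HasDerivAt F (-γ * F t + g t) t) (hg : ∀ t ∈ Icc 0 T, g t ≤ a) :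
    ∀ t ∈ Icc 0 T, F t ≤ max (F 0) (a / γ) := by
  set G := fun s => exp (γ * s) * (F s - a / γ)
  have hG : ∀ s ∈ Icc 0 T, HasDerivAt G (exp (γ * s) * (g s - a)) s := fun s hs =>
    (((hasDerivAt_id' s).const_mul γ).exp.mul ((hF s hs).sub_const (a / γ))).congr_deriv (by
      field_simp; ring)
  have hanti : AntitoneOn G (Icc 0 T) :=
    antitoneOn_of_hasDerivWithinAt_nonpos (convex_Icc 0 T)
      (fun s hs => (hG s hs).continuousAt.continuousWithinAt)
      (fun s hs => (hG s (interior_subset hs)).hasDerivWithinAt)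
      (fun s hs => mul_nonpos_of_nonneg_of_nonpos (exp_pos _).le
        (sub_nonpos.2 (hg s (interior_subset hs))))
  intro t ht
  by_contra! hlt
  have hGt : G t ≤ G 0 := hanti ⟨le_rfl, ht.1.trans ht.2⟩ ht ht.1
  have hexp : 1 ≤ exp (γ * t) := one_le_exp (mul_nonneg hγ.le ht.1)
  have hpos : 0 < F t - a / γ := sub_pos.2 ((le_max_right _ _).trans_lt hlt)
  have : F t - a / γ ≤ F 0 - a / γ := by
    simpa [G] using (le_mul_of_one_le_left hpos.le hexp).trans hGt
  linarith [le_max_left (F 0) (a / γ)]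

lemma abs_le_max_of_hasDerivAt_eq_neg_mul_add {F g : ℝ → ℝ} {γ a T : ℝ} (hγ : 0 < γ)
    (hF : ∀ t ∈ Icc 0 T, HasDerivAt F (-γ * F t + g t) t) (hg : ∀ t ∈ Icc 0 T, |g t| ≤ a) :
    ∀ t ∈ Icc 0 T, |F t| ≤ max |F 0| (a / γ) := by
  intro t ht
  have hupper := le_max_of_hasDerivAt_eq_neg_mul_add hγ hF
    (fun s hs => (abs_le.1 (hg s hs)).2) t ht
  have hlower := le_max_of_hasDerivAt_eq_neg_mul_add (F := fun s => -F s) (g := fun s => -g s) hγ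
    (fun s hs => (hF s hs).neg.congr_deriv (by ring))
    (fun s hs => neg_le.1 (abs_le.1 (hg s hs)).1) t ht
  exact abs_le'.2 ⟨hupper.trans (max_le_max_right _ (le_abs_self _)),
    hlower.trans (max_le_max_right _ (neg_le_abs _))⟩

lemma cos_mul_one_add_cos_mul_le (x : ℝ) {w m : ℝ} (hw : |w| ≤ m) :
    cos x * (1 + cos x) * w ≤ 2 * m := by
  have hc : |cos x * (1 + cos x)| ≤ 2 := by
    rw [abs_le]
    constructor <;> nlinarith [neg_one_le_cos x, cos_le_one x]
  calc cos x * (1 + cos x) * w ≤ |cos x * (1 + cos x)| * |w| := by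
        rw [← abs_mul]; exact le_abs_self _
    _ ≤ 2 * m := mul_le_mul hc hw (abs_nonneg _) zero_le_two

lemma mul_sub_mul_le_three_mul_sq {c c' I x D : ℝ} (hc : |c| ≤ 1) (hI : |I| ≤ 2)
    (hcc' : |c - c'| ≤ D) (hcI : |1 + c - I| ≤ D) (hx : |x| ≤ D) :
    x * (c * (1 + c) - I * c') ≤ 3 * D ^ 2 := by
  have hD : 0 ≤ D := (abs_nonneg _).trans hx
  have hdiff : |c * (1 + c) - I * c'| ≤ 3 * D :=
    calc |c * (1 + c) - I * c'| = |I * (c - c') + c * (1 + c - I)| := by ring_nf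
      _ ≤ |I| * |c - c'| + |c| * |1 + c - I| := by
        rw [← abs_mul, ← abs_mul]; exact abs_add_le _ _
      _ ≤ 2 * D + 1 * D := add_le_add (mul_le_mul hI hcc' (abs_nonneg _) zero_le_two)
        (mul_le_mul hc hcI (abs_nonneg _) zero_le_one)
      _ = 3 * D := by ring
  calc x * (c * (1 + c) - I * c') ≤ |x| * |c * (1 + c) - I * c'| := by
        rw [← abs_mul]; exact le_abs_self _
    _ ≤ D * (3 * D) := mul_le_mul hx hdiff (abs_nonneg _) hD
    _ = 3 * D ^ 2 := by ring

section WinfreeInertia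

variable {N : ℕ}

/-- The paper's `𝓘_c(Θ)`. -/
noncomputable def orderParam (x : Fin N → ℝ) : ℝ := (∑ j, (1 + cos (x j))) / N

lemma orderParam_nonneg (x : Fin N → ℝ) : 0 ≤ orderParam x :=
  div_nonneg (Finset.sum_nonneg fun j _ => by linarith [neg_one_le_cos (x j)]) (Nat.cast_nonneg N)

lemma orderParam_le_two (x : Fin N → ℝ) : orderParam x ≤ 2 :=
  div_le_of_le_mul₀ (Nat.cast_nonneg N) zero_le_two <| by
    calc ∑ j, (1 + cos (x j)) ≤ ∑ _j : Fin N, (2 : ℝ) :=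
          Finset.sum_le_sum fun j _ => by linarith [cos_le_one (x j)]
      _ = 2 * N := by simp [mul_comm]

lemma abs_orderParam_le_two (x : Fin N → ℝ) : |orderParam x| ≤ 2 :=
  abs_le.2 ⟨by linarith [orderParam_nonneg x], orderParam_le_two x⟩

lemma abs_one_add_cos_mean_sub_orderParam_le (hN : 0 < N) {x : Fin N → ℝ} {D : ℝ}
    (h : ∀ k, |(∑ l, x l) / N - x k| ≤ D) :
    |1 + cos ((∑ l, x l) / N) - orderParam x| ≤ D :=
  abs_sub_mean_le hN fun k => by
    simpa using (abs_cos_sub_cos_le _ (x k)).trans (h k)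

lemma abs_mul_orderParam_mul_sin_sub_sin_le {κ : ℝ} (hκ : 0 ≤ κ) (x : Fin N → ℝ) (a b : ℝ) :
    |κ * orderParam x * (sin a - sin b)| ≤ 2 * κ * |a - b| := by
  rw [abs_mul, abs_mul, abs_of_nonneg hκ, abs_of_nonneg (orderParam_nonneg x)]
  exact mul_le_mul (by linarith [mul_le_mul_of_nonneg_left (orderParam_le_two x) hκ])
    (abs_sin_sub_sin_le a b) (abs_nonneg _) (by positivity)

variable {θ ω : Fin N → ℝ → ℝ} {ν : Fin N → ℝ} {γ κ : ℝ}

lemma hasDerivAt_freq_sub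
    (hω : ∀ i, ∀ t : ℝ, HasDerivAt (ω i)
      (-γ * ω i t + ν i - κ / N * sin (θ i t) * ∑ j, (1 + cos (θ j t))) t)
    (i j : Fin N) (t : ℝ) :
    HasDerivAt (fun s => ω i s - ω j s) (-γ * (ω i t - ω j t) +
      (ν i - ν j - κ * orderParam (θ · t) * (sin (θ i t) - sin (θ j t)))) t :=
  ((hω i t).sub (hω j t)).congr_deriv (by unfold orderParam; ring)

lemma abs_freq_sub_le (hγ : 0 < γ) (hκ : 0 ≤ κ)
    (hω : ∀ i, ∀ t : ℝ, HasDerivAt (ω i)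
      (-γ * ω i t + ν i - κ / N * sin (θ i t) * ∑ j, (1 + cos (θ j t))) t)
    {T D : ℝ} (hsup : ∀ t ∈ Icc (0 : ℝ) T, vdiam (fun i => θ i t) ≤ D) (i j : Fin N) :
    ∀ t ∈ Icc (0 : ℝ) T,
      |ω i t - ω j t| ≤ max (vdiam (fun i => ω i 0)) ((vdiam ν + 2 * κ * D) / γ) := by
  intro t ht
  have hforcing : ∀ s ∈ Icc (0 : ℝ) T,
      |ν i - ν j - κ * orderParam (θ · s) * (sin (θ i s) - sin (θ j s))| ≤
        vdiam ν + 2 * κ * D := fun s hs =>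
    calc _ ≤ |ν i - ν j| + |κ * orderParam (θ · s) * (sin (θ i s) - sin (θ j s))| :=
          abs_sub _ _
      _ ≤ vdiam ν + 2 * κ * D := add_le_add (abs_sub_le_vdiam ν i j) <|
          (abs_mul_orderParam_mul_sin_sub_sin_le hκ _ _ _).trans <|
            mul_le_mul_of_nonneg_left ((abs_sub_le_vdiam (θ · s) i j).trans (hsup s hs))
              (by positivity)
  exact (abs_le_max_of_hasDerivAt_eq_neg_mul_add hγ (fun s _ => hasDerivAt_freq_sub hω i j s)
    hforcing t ht).trans (max_le_max_right _ (abs_sub_le_vdiam (ω · 0) i j))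

end WinfreeInertia

theorem stmt7_general (N : ℕ) (hN : 0 < N) (θ ω : Fin N → ℝ → ℝ) (ν : Fin N → ℝ)
    (γ κ : ℝ) (hγ : 0 < γ) (hκ : 0 ≤ κ)
    (hθ : ∀ i, ∀ t : ℝ, HasDerivAt (θ i) (ω i t) t)
    (hω : ∀ i, ∀ t : ℝ, HasDerivAt (ω i)
      (-γ * ω i t + ν i - κ / N * Real.sin (θ i t) * ∑ j, (1 + Real.cos (θ j t))) t)
    (T D : ℝ)
    (hsup : ∀ t ∈ Set.Icc (0:ℝ) T, vdiam (fun i => θ i t) ≤ D)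
    (m₀ : ℝ) (hm₀ : m₀ = max (vdiam (fun i => ω i 0)) ((vdiam ν + 2 * κ * D) / γ)) :
    ∀ i j, ∀ t ∈ Set.Ioo (0:ℝ) T, ∃ d : ℝ,
      HasDerivAt (fun s => (ω i s - ω j s) + γ * (θ i s - θ j s)) d t ∧
      d ≤ vdiam ν + 2 * κ / γ * m₀ + 3 * κ * D ^ 2
          - κ / γ * Real.cos ((∑ k, θ k t) / N) * (1 + Real.cos ((∑ k, θ k t) / N)) *
            ((ω i t - ω j t) + γ * (θ i t - θ j t)) := by
  intro i j t ht
  have htT : t ∈ Icc 0 T := Ioo_subset_Icc_self ht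
  set θc := (∑ k, θ k t) / N
  have hdiam : ∀ k l, |θ k t - θ l t| ≤ D := fun k l =>
    (abs_sub_le_vdiam (θ · t) k l).trans (hsup t htT)
  have hcenter : ∀ k, |θc - θ k t| ≤ D := fun k =>
    abs_sub_comm (θ k t) θc ▸ abs_sub_mean_le hN (hdiam k)
  obtain ⟨ξ, hξmem, hsin⟩ := exists_mem_uIcc_sin_sub_sin (θ i t) (θ j t)
  have hcosξ : |cos θc - cos ξ| ≤ D := (abs_cos_sub_cos_le _ _).trans <| mem_Icc_iff_abs_le.2 <|
    uIcc_subset_Icc (mem_Icc_iff_abs_le.1 (hcenter i)) (mem_Icc_iff_abs_le.1 (hcenter j)) hξmem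
  have hfreq : cos θc * (1 + cos θc) * (ω i t - ω j t) ≤ 2 * m₀ :=
    cos_mul_one_add_cos_mul_le θc (hm₀ ▸ abs_freq_sub_le hγ hκ hω hsup i j t htT)
  have hphase : (θ i t - θ j t) * (cos θc * (1 + cos θc) - orderParam (θ · t) * cos ξ) ≤
      3 * D ^ 2 :=
    mul_sub_mul_le_three_mul_sq (abs_cos_le_one θc) (abs_orderParam_le_two _) hcosξ
      (abs_one_add_cos_mean_sub_orderParam_le hN hcenter) (hdiam i j)
  refine ⟨_, (hasDerivAt_freq_sub hω i j t).add (((hθ i t).sub (hθ j t)).const_mul γ), ?_⟩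
  have hκγ : κ / γ * γ = κ := div_mul_cancel₀ κ hγ.ne'
  rw [hsin]
  linear_combination (le_abs_self _).trans (abs_sub_le_vdiam ν i j) +
    mul_le_mul_of_nonneg_left hfreq (div_nonneg hκ hγ.le) + mul_le_mul_of_nonneg_left hphase hκ +
    cos θc * (1 + cos θc) * (θ i t - θ j t) * hκγ

/-- Differential inequality for `ω^{ij} + γθ^{ij}` for the
second-order Winfree model with inertia, under the a priori phase-diameter
bound `𝒟(Θ_t) ≤ D` on `[0,T]`, with `m₀ = max{𝒟(Ω₀), (𝒟(ν)+2κD)/γ}`. -/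
theorem stmt7 (N : ℕ) (hN : 0 < N) (θ ω : Fin N → ℝ → ℝ) (ν : Fin N → ℝ)
    (γ κ : ℝ) (hγ : 0 < γ) (hκ : 0 ≤ κ)
    (hθ : ∀ i, ∀ t : ℝ, HasDerivAt (θ i) (ω i t) t)
    (hω : ∀ i, ∀ t : ℝ, HasDerivAt (ω i)
      (-γ * ω i t + ν i - κ / N * Real.sin (θ i t) * ∑ j, (1 + Real.cos (θ j t))) t)
    (T D : ℝ) (hT : 0 < T) (hD : 0 < D)
    (hsup : ∀ t ∈ Set.Icc (0:ℝ) T, vdiam (fun i => θ i t) ≤ D)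
    (m₀ : ℝ) (hm₀ : m₀ = max (vdiam (fun i => ω i 0)) ((vdiam ν + 2 * κ * D) / γ)) :
    ∀ i j, ∀ t ∈ Set.Ioo (0:ℝ) T, ∃ d : ℝ,
      HasDerivAt (fun s => (ω i s - ω j s) + γ * (θ i s - θ j s)) d t ∧
      d ≤ vdiam ν + 2 * κ / γ * m₀ + 3 * κ * D ^ 2
          - κ / γ * Real.cos ((∑ k, θ k t) / N) * (1 + Real.cos ((∑ k, θ k t) / N)) *
            ((ω i t - ω j t) + γ * (θ i t - θ j t)) :=
  stmt7_general N hN θ ω ν γ κ hγ hκ hθ hω T D hsup m₀ hm₀
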